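/- For any prefix-closed invariant φ and any stratified extension D of a configuration C, if C ⊨ φ then D ⊨ φ. -/
import Mathlib


/-- Pointwise set justification. -/
def JustSet {E : Type*} (just : E → E → Prop) (C D : Set E) : Prop :=
  ∀ e ∈ D, ∃ d ∈ C, just d e

/-- Acyclic extension: chain of inclusions, each step a pointwise justification. -/
def AcyclicExt {E : Type*} (just : E → E → Prop) : Set E → Set E → Prop :=
  Relation.ReflTransGen (fun C D => C ⊆ D ∧ JustSet just C D)

/-- `C` inevitably justifies `D`: `D` justifies itself, and every acyclic
extension `C'` of `C` has an acyclic extension `C''` justifying `D`. -/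
def InevJust {E : Type*} (just : E → E → Prop) (C D : Set E) : Prop :=
  JustSet just D D ∧
  ∀ C', AcyclicExt just C C' → ∃ C'', AcyclicExt just C' C'' ∧ JustSet just C'' D

/-- Stratified extension: chain `C = C₁ ⊆ ... ⊆ Cₙ = D` with each `Cᵢ`
inevitably justifying `Cᵢ₊₁`. -/
def StratExt {E : Type*} (just : E → E → Prop) : Set E → Set E → Prop :=
  Relation.ReflTransGen (fun C D => C ⊆ D ∧ InevJust just C D)

/-- For any prefix-closed invariant `φ` and any stratified extension `D` of a
configuration `C`, if `C ⊨ φ` then `D ⊨ φ`. -/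
theorem stmt13 {E : Type*} (just : E → E → Prop) (Sat : Set E → Prop)
    (hpref : ∀ C D : Set E, C ⊆ D → Sat D → Sat C)
    (hinv : ∀ C D : Set E, AcyclicExt just C D → Sat C → Sat D)
    (C D : Set E) (hext : StratExt just C D) (hC : Sat C) : Sat D := by
  induction hext with
  | refl => exact hC
  | tail _ hstep ih =>
    rename_i D D' _
    obtain ⟨hsub, hselfD', hforall⟩ := hstep
    obtain ⟨C'', hextC'', hjustD'⟩ := hforall D Relation.ReflTransGen.refl
    rcases Relation.ReflTransGen.cases_tail hextC'' with heq | ⟨X, hDX, hXsub, hXjust⟩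
    · -- C'' = D, so JustSet D D' and D ⊆ D' gives a direct acyclic step D → D'
      exact hinv D D' (Relation.ReflTransGen.single ⟨hsub, heq ▸ hjustD'⟩) ih
    · -- last chain step X → C'' gives self-justification of C''
      have hselfC'' : JustSet just C'' C'' := fun e he =>
        let ⟨d, hd, hj⟩ := hXjust e he; ⟨d, hXsub hd, hj⟩
      have hstep2 : AcyclicExt just D (C'' ∪ D') := by
        refine hextC''.tail ⟨Set.subset_union_left, fun e he => ?_⟩
        rcases he with he | he
        · exact hselfC'' e he
        · exact hjustD' e he
      exact hpref D' (C'' ∪ D') Set.subset_union_right (hinv D (C'' ∪ D') hstep2 ih)
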